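/- arXiv:2212.11383 — 3 statements merged into one kernel-verified Lean document; each statement's English description precedes it below -/
import Mathlib

section
/- Let V be a finite-dimensional real vector space, B a nondegenerate alternating bilinear form on V, P : V → V self-adjoint with respect to B, and A the alternating form A(u, v) = B(Pu, v). Let α, β ∈ ℝ with β ≠ 0, suppose (P² − 2αP + (α² + β²)I)^n = 0 for some n ≥ 1, and let J be the semisimple part of the Jordan–Chevalley decomposition of (P − αI)/β, so J² = −I. Define A^ℂ(u, v) = A(u, v) − i·A(u, Jv) and B^ℂ(u, v) = B(u, v) − i·B(u, Jv). Then a real-linear automorphism Q of V preserves both A and B (i.e. A(Qu, Qv) = A(u, v) and B(Qu, Qv) = B(u, v) for all u, v) if and only if Q commutes with J and preserves both A^ℂ and B^ℂ (i.e. A^ℂ(Qu, Qv) = A^ℂ(u, v) and B^ℂ(Qu, Qv) = B^ℂ(u, v) for all u, v). Consequently Aut(V, A, B) is naturally identified with the group of complex-linear automorphisms of (V, J) preserving A^ℂ and B^ℂ. -/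
/-- An operator on a vector space is semisimple if every invariant subspace has an
invariant complement. -/
def IsSemisimpleOperator {K V : Type*} [Field K] [AddCommGroup V] [Module K V]
    (S : Module.End K V) : Prop :=
  ∀ U : Submodule K V, (∀ x ∈ U, S x ∈ U) →
    ∃ U' : Submodule K V, IsCompl U U' ∧ ∀ x ∈ U', S x ∈ U'

/-! Write `S = (P − α)/β = J + Nn`. By uniqueness of the Jordan–Chevalley decomposition, `J` is
the semisimple part of `S` and hence a polynomial in `S`, so it commutes with every operator
commuting with `P`. An automorphism preserving `B` and `A = B(P·, ·)` commutes with `P` by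
nondegeneracy of `B`, hence with `J`, and then it also preserves `A(·, J·)` and `B(·, J·)`.
Conversely, `A` and `B` are the real parts of `A^ℂ` and `B^ℂ`. -/

lemma IsSemisimpleOperator.isSemisimple {K V : Type*} [Field K] [AddCommGroup V] [Module K V]
    {S : Module.End K V} (hS : IsSemisimpleOperator S) : S.IsSemisimple :=
  Module.End.isSemisimple_iff.mpr fun U hU =>
    let ⟨U', hcompl, hU'⟩ := hS U hU
    ⟨U', hU', hcompl⟩

namespace Module.End

variable {K V : Type*} [Field K] [PerfectField K] [AddCommGroup V] [Module K V]
  [FiniteDimensional K V]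

lemma mem_adjoin_of_isNilpotent_of_isSemisimple {n s : End K V} (hn : IsNilpotent n)
    (hs : s.IsSemisimple) (hc : Commute n s) : s ∈ Algebra.adjoin K {n + s} := by
  obtain ⟨n₀, hn₀, s₀, hs₀, hn₀_nil, hs₀_ss, h₀⟩ := (n + s).exists_isNilpotent_isSemisimple
  have hc₀ : Commute n₀ s₀ :=
    Algebra.commute_of_mem_adjoin_singleton_of_commute hs₀
      (Algebra.commute_of_mem_adjoin_self hn₀).symm
  obtain rfl := (isNilpotent_isSemisimple_unique hn hs hn₀_nil hs₀_ss hc hc₀ h₀).2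
  exact hs₀

lemma commute_of_commute_nilpotent_add_semisimple {n s g : End K V} (hn : IsNilpotent n)
    (hs : s.IsSemisimple) (hc : Commute n s) (hg : Commute g (n + s)) : Commute g s :=
  Algebra.commute_of_mem_adjoin_singleton_of_commute
    (mem_adjoin_of_isNilpotent_of_isSemisimple hn hs hc) hg

end Module.End

lemma LinearMap.BilinForm.commute_of_preserves {R M : Type*} [CommRing R] [AddCommGroup M]
    [Module R M] {B : LinearMap.BilinForm R M} (hB : B.SeparatingLeft) {P : Module.End R M}
    {Q : M ≃ₗ[R] M} (hPQ : ∀ u v, B (P (Q u)) (Q v) = B (P u) v)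
    (hQ : ∀ u v, B (Q u) (Q v) = B u v) : Commute P (Q : Module.End R M) :=
  LinearMap.ext fun u => sub_eq_zero.mp <| hB _ fun w => by
    obtain ⟨w, rfl⟩ := Q.surjective w
    rw [Module.End.mul_apply, Module.End.mul_apply, map_sub, LinearMap.sub_apply,
      LinearEquiv.coe_coe, hPQ, hQ, sub_self]

def complexifiedForm {V : Type*} (f : V → V → ℝ) (J : V → V) (u v : V) : ℂ :=
  f u v - Complex.I * f u (J v)

lemma complexifiedForm_preserved_iff {V : Type*} {f : V → V → ℝ} {J Q : V → V}
    (hQJ : ∀ v, Q (J v) = J (Q v)) :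
    (∀ u v, complexifiedForm f J (Q u) (Q v) = complexifiedForm f J u v) ↔
      ∀ u v, f (Q u) (Q v) = f u v := by
  refine ⟨fun h u v => by simpa [complexifiedForm] using congrArg Complex.re (h u v),
    fun h u v => ?_⟩
  simp only [complexifiedForm, ← hQJ, h]

theorem automorphisms_real_iff_complex_general
    (V : Type*) [AddCommGroup V] [Module ℝ V] [FiniteDimensional ℝ V]
    (B : LinearMap.BilinForm ℝ V)
    (hBnd : ∀ u : V, (∀ v : V, B u v = 0) → u = 0)
    (P : Module.End ℝ V)
    (α β : ℝ)
    (J Nn : Module.End ℝ V) (hJss : IsSemisimpleOperator J) (hNn : IsNilpotent Nn)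
    (hcomm : J * Nn = Nn * J)
    (hsum : β⁻¹ • (P - α • (1 : Module.End ℝ V)) = J + Nn)
    (Ac Bc : V → V → ℂ)
    (hAc : ∀ u v : V, Ac u v = (B (P u) v : ℂ) - Complex.I * (B (P u) (J v) : ℂ))
    (hBc : ∀ u v : V, Bc u v = (B u v : ℂ) - Complex.I * (B u (J v) : ℂ))
    (Q : V ≃ₗ[ℝ] V) :
    ((∀ u v : V, B (P (Q u)) (Q v) = B (P u) v) ∧
      (∀ u v : V, B (Q u) (Q v) = B u v)) ↔
    ((∀ v : V, Q (J v) = J (Q v)) ∧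
      (∀ u v : V, Ac (Q u) (Q v) = Ac u v) ∧
      (∀ u v : V, Bc (Q u) (Q v) = Bc u v)) := by
  obtain rfl : Ac = complexifiedForm (fun u v => B (P u) v) J := funext₂ hAc
  obtain rfl : Bc = complexifiedForm (fun u v => B u v) J := funext₂ hBc
  constructor
  · rintro ⟨hA, hB⟩
    have hQS : Commute (Q : Module.End ℝ V) (Nn + J) := by
      rw [add_comm, ← hsum]
      exact ((B.commute_of_preserves hBnd hA hB).symm.sub_right
        ((Commute.one_right _).smul_right α)).smul_right β⁻¹
    have hQJ : ∀ v, Q (J v) = J (Q v) := LinearMap.congr_fun <|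
      Module.End.commute_of_commute_nilpotent_add_semisimple hNn hJss.isSemisimple hcomm.symm hQS
    exact ⟨hQJ, (complexifiedForm_preserved_iff hQJ).2 hA,
      (complexifiedForm_preserved_iff hQJ).2 hB⟩
  · rintro ⟨hQJ, hA, hB⟩
    exact ⟨(complexifiedForm_preserved_iff hQJ).1 hA, (complexifiedForm_preserved_iff hQJ).1 hB⟩

/-- Let `(V, B)` be a real symplectic space, `P` a `B`-self-adjoint operator with the single
pair of complex conjugate eigenvalues `α ± iβ` (`β ≠ 0`), `A(u,v) = B(Pu, v)`, `J` the
semisimple part of the Jordan–Chevalley decomposition of `(P − αI)/β` (so `J² = −I`), and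
`A^ℂ(u,v) = A(u,v) − i·A(u,Jv)`, `B^ℂ(u,v) = B(u,v) − i·B(u,Jv)`. Then a real-linear
automorphism `Q` of `V` preserves both `A` and `B` iff `Q` commutes with `J` (i.e. is
complex linear) and preserves both `A^ℂ` and `B^ℂ`. -/
theorem automorphisms_real_iff_complex
    (V : Type*) [AddCommGroup V] [Module ℝ V] [FiniteDimensional ℝ V]
    (B : LinearMap.BilinForm ℝ V) (hBalt : B.IsAlt)
    (hBnd : ∀ u : V, (∀ v : V, B u v = 0) → u = 0)
    (P : Module.End ℝ V) (hP : ∀ u v : V, B (P u) v = B u (P v))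
    (α β : ℝ) (hβ : β ≠ 0) (n : ℕ) (hn : 1 ≤ n)
    (hchar : (P ^ 2 - (2 * α) • P + (α ^ 2 + β ^ 2) • (1 : Module.End ℝ V)) ^ n = 0)
    (J Nn : Module.End ℝ V) (hJss : IsSemisimpleOperator J) (hNn : IsNilpotent Nn)
    (hcomm : J * Nn = Nn * J)
    (hsum : β⁻¹ • (P - α • (1 : Module.End ℝ V)) = J + Nn)
    (hJ : J ^ 2 = -1)
    (Ac Bc : V → V → ℂ)
    (hAc : ∀ u v : V, Ac u v = (B (P u) v : ℂ) - Complex.I * (B (P u) (J v) : ℂ))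
    (hBc : ∀ u v : V, Bc u v = (B u v : ℂ) - Complex.I * (B u (J v) : ℂ))
    (Q : V ≃ₗ[ℝ] V) :
    ((∀ u v : V, B (P (Q u)) (Q v) = B (P u) v) ∧
      (∀ u v : V, B (Q u) (Q v) = B u v)) ↔
    ((∀ v : V, Q (J v) = J (Q v)) ∧
      (∀ u v : V, Ac (Q u) (Q v) = Ac u v) ∧
      (∀ u v : V, Bc (Q u) (Q v) = Bc u v)) :=
  automorphisms_real_iff_complex_general V B hBnd P α β J Nn hJss hNn hcomm hsum Ac Bc hAc hBc Q
end

section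
/- Let E be a finite-dimensional real normed vector space, P : E → End(E) a smooth field of endomorphisms, and λ : E → ℝ a smooth function. Suppose the Nijenhuis tensor of P vanishes, i.e. for all smooth vector fields X, Y : E → E and all x ∈ E: [PX, PY](x) = P(x)[PX, Y](x) + P(x)[X, PY](x) − P(x)²[X, Y](x), where (PX)(x) := P(x)(X(x)) and [·,·] is the Lie bracket of vector fields. Then for all smooth vector fields u, v : E → E and all x ∈ E: [(P−λ)u, (P−λ)v](x) = (P(x) − λ(x)·id)([u, Pv](x) + [Pu, v](x) − (P(x) + λ(x)·id)[u, v](x)) + (L_{(P−λ)v}λ)(x)·u(x) − (L_{(P−λ)u}λ)(x)·v(x), where ((P−λ)u)(x) := P(x)(u(x)) − λ(x)u(x) and L_w f denotes the Lie derivative (L_w f)(x) = df_x(w(x)). -/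
/-- The Lie bracket of two (smooth) vector fields on a normed space `E`, viewed as maps
`E → E`: `[X, Y](x) = DY(x)(X(x)) − DX(x)(Y(x))`. -/
noncomputable def vfBracket {E : Type*} [NormedAddCommGroup E] [NormedSpace ℝ E]
    (X Y : E → E) : E → E :=
  fun x => fderiv ℝ Y x (X x) - fderiv ℝ X x (Y x)

/-- If the Nijenhuis tensor of a smooth field of endomorphisms `P` vanishes, then for any
smooth function `λ` and smooth vector fields `u`, `v`:
`[(P−λ)u, (P−λ)v] = (P−λ)([u, Pv] + [Pu, v] − (P+λ)[u, v]) + (L_{(P−λ)v}λ)u − (L_{(P−λ)u}λ)v`. -/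
theorem bracket_of_shifted_nijenhuis
    {E : Type*} [NormedAddCommGroup E] [NormedSpace ℝ E] [FiniteDimensional ℝ E]
    (P : E → E →L[ℝ] E) (hP : ContDiff ℝ (⊤ : ℕ∞) P)
    (lam : E → ℝ) (hlam : ContDiff ℝ (⊤ : ℕ∞) lam)
    (hN : ∀ X Y : E → E, ContDiff ℝ (⊤ : ℕ∞) X → ContDiff ℝ (⊤ : ℕ∞) Y → ∀ x : E,
      vfBracket (fun z => P z (X z)) (fun z => P z (Y z)) x
        = P x (vfBracket (fun z => P z (X z)) Y x)
          + P x (vfBracket X (fun z => P z (Y z)) x)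
          - P x (P x (vfBracket X Y x)))
    (u v : E → E) (hu : ContDiff ℝ (⊤ : ℕ∞) u) (hv : ContDiff ℝ (⊤ : ℕ∞) v) (x : E) :
    vfBracket (fun z => P z (u z) - lam z • u z) (fun z => P z (v z) - lam z • v z) x
      = (P x (vfBracket u (fun z => P z (v z)) x + vfBracket (fun z => P z (u z)) v x
            - (P x (vfBracket u v x) + lam x • vfBracket u v x))
          - lam x • (vfBracket u (fun z => P z (v z)) x + vfBracket (fun z => P z (u z)) v x
            - (P x (vfBracket u v x) + lam x • vfBracket u v x)))
        + (fderiv ℝ lam x (P x (v x) - lam x • v x)) • u x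
        - (fderiv ℝ lam x (P x (u x) - lam x • u x)) • v x := by
  have hPu : ContDiff ℝ (⊤ : ℕ∞) (fun z => P z (u z)) := hP.clm_apply hu
  have hPv : ContDiff ℝ (⊤ : ℕ∞) (fun z => P z (v z)) := hP.clm_apply hv
  have dPu : DifferentiableAt ℝ (fun z => P z (u z)) x :=
    (hPu.differentiable (by simp)).differentiableAt
  have dPv : DifferentiableAt ℝ (fun z => P z (v z)) x :=
    (hPv.differentiable (by simp)).differentiableAt
  have du : DifferentiableAt ℝ u x := (hu.differentiable (by simp)).differentiableAt
  have dv : DifferentiableAt ℝ v x := (hv.differentiable (by simp)).differentiableAt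
  have dlam : DifferentiableAt ℝ lam x := (hlam.differentiable (by simp)).differentiableAt
  have dlu : DifferentiableAt ℝ (fun z => lam z • u z) x := dlam.smul du
  have dlv : DifferentiableAt ℝ (fun z => lam z • v z) x := dlam.smul dv
  have key := hN u v hu hv x
  simp only [vfBracket] at key ⊢
  rw [fderiv_fun_sub dPv dlv, fderiv_fun_sub dPu dlu, fderiv_fun_smul dlam dv, fderiv_fun_smul dlam du]
  simp only [ContinuousLinearMap.sub_apply, ContinuousLinearMap.add_apply,
    ContinuousLinearMap.coe_smul', Pi.smul_apply, ContinuousLinearMap.smulRight_apply,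
    map_sub, map_add, map_smul, smul_sub, smul_add, smul_smul, smul_eq_mul] at key ⊢
  have key2 := sub_eq_iff_eq_add.mp key
  rw [key2]
  module
end

section
/- Let E be a finite-dimensional real normed vector space, P : E → End(E) a smooth field of endomorphisms, and λ : E → ℝ a smooth function. Suppose the Nijenhuis tensor of P vanishes, i.e. for all smooth vector fields X, Y : E → E and all x ∈ E: [PX, PY](x) = P(x)[PX, Y](x) + P(x)[X, PY](x) − P(x)²[X, Y](x), and suppose moreover that dλ_x((P(x) − λ(x)·id)w) = 0 for every x ∈ E and every w ∈ E. Then the distribution Im(P − λ·id) is involutive: for all smooth vector fields u, v : E → E and every x ∈ E, the bracket [(P−λ)u, (P−λ)v](x) lies in the range of the operator P(x) − λ(x)·id, where ((P−λ)u)(x) := P(x)(u(x)) − λ(x)u(x). -/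
section aux

variable {E : Type*} [NormedAddCommGroup E] [NormedSpace ℝ E]

lemma vfBracket_sub (X X' Y Y' : E → E) (x : E)
    (hX : DifferentiableAt ℝ X x) (hX' : DifferentiableAt ℝ X' x)
    (hY : DifferentiableAt ℝ Y x) (hY' : DifferentiableAt ℝ Y' x) :
    vfBracket (fun z => X z - X' z) (fun z => Y z - Y' z) x
      = vfBracket X Y x - vfBracket X Y' x - vfBracket X' Y x + vfBracket X' Y' x := by
  simp only [vfBracket, fderiv_fun_sub hX hX', fderiv_fun_sub hY hY',
    ContinuousLinearMap.sub_apply, map_sub]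
  abel

lemma vfBracket_smul_right (f : E → ℝ) (X Y : E → E) (x : E)
    (hf : DifferentiableAt ℝ f x) (hY : DifferentiableAt ℝ Y x) :
    vfBracket X (fun z => f z • Y z) x
      = f x • vfBracket X Y x + (fderiv ℝ f x (X x)) • Y x := by
  simp only [vfBracket, fderiv_fun_smul hf hY, ContinuousLinearMap.add_apply,
    ContinuousLinearMap.smul_apply, ContinuousLinearMap.smulRight_apply, map_smul,
    smul_sub]
  abel

lemma vfBracket_smul_left (f : E → ℝ) (X Y : E → E) (x : E)
    (hf : DifferentiableAt ℝ f x) (hX : DifferentiableAt ℝ X x) :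
    vfBracket (fun z => f z • X z) Y x
      = f x • vfBracket X Y x - (fderiv ℝ f x (Y x)) • X x := by
  simp only [vfBracket, fderiv_fun_smul hf hX, ContinuousLinearMap.add_apply,
    ContinuousLinearMap.smul_apply, ContinuousLinearMap.smulRight_apply, map_smul,
    smul_sub]
  abel

end aux

/-- If the Nijenhuis tensor of a smooth field of endomorphisms `P` vanishes and the smooth
function `λ` satisfies `dλ((P − λ·id)w) = 0` everywhere, then the distribution
`Im(P − λ·id)` is involutive: the bracket of two vector fields of the form `(P − λ)u`,
`(P − λ)v` lies pointwise in the range of `P(x) − λ(x)·id`. -/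
theorem image_distribution_involutive
    {E : Type*} [NormedAddCommGroup E] [NormedSpace ℝ E] [FiniteDimensional ℝ E]
    (P : E → E →L[ℝ] E) (hP : ContDiff ℝ (⊤ : ℕ∞) P)
    (lam : E → ℝ) (hlam : ContDiff ℝ (⊤ : ℕ∞) lam)
    (hN : ∀ X Y : E → E, ContDiff ℝ (⊤ : ℕ∞) X → ContDiff ℝ (⊤ : ℕ∞) Y → ∀ x : E,
      vfBracket (fun z => P z (X z)) (fun z => P z (Y z)) x
        = P x (vfBracket (fun z => P z (X z)) Y x)
          + P x (vfBracket X (fun z => P z (Y z)) x)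
          - P x (P x (vfBracket X Y x)))
    (hdl : ∀ (x : E) (w : E), fderiv ℝ lam x (P x w - lam x • w) = 0) :
    ∀ u v : E → E, ContDiff ℝ (⊤ : ℕ∞) u → ContDiff ℝ (⊤ : ℕ∞) v → ∀ x : E,
      ∃ w : E,
        vfBracket (fun z => P z (u z) - lam z • u z) (fun z => P z (v z) - lam z • v z) x
          = P x w - lam x • w := by
  intro u v hu hv x
  have hPu : ContDiff ℝ (⊤ : ℕ∞) (fun z => P z (u z)) := hP.clm_apply hu
  have hPv : ContDiff ℝ (⊤ : ℕ∞) (fun z => P z (v z)) := hP.clm_apply hv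
  have hlu : ContDiff ℝ (⊤ : ℕ∞) (fun z => lam z • u z) := hlam.smul hu
  have hlv : ContDiff ℝ (⊤ : ℕ∞) (fun z => lam z • v z) := hlam.smul hv
  have dPu := hPu.differentiable (by simp) x
  have dPv := hPv.differentiable (by simp) x
  have dlu := hlu.differentiable (by simp) x
  have dlv := hlv.differentiable (by simp) x
  have du := hu.differentiable (by simp) x
  have dv := hv.differentiable (by simp) x
  have dlam := hlam.differentiable (by simp) x
  -- key consequence of hdl : dλ(Pw) = λ * dλ(w)
  have hdl' : ∀ w : E, fderiv ℝ lam x (P x w) = lam x * fderiv ℝ lam x w := by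
    intro w
    have := hdl x w
    rw [map_sub, map_smul, sub_eq_zero] at this
    simpa [smul_eq_mul] using this
  refine ⟨vfBracket (fun z => P z (u z)) v x + vfBracket u (fun z => P z (v z)) x
      - P x (vfBracket u v x) - lam x • vfBracket u v x, ?_⟩
  rw [vfBracket_sub _ _ _ _ x dPu dlu dPv dlv]
  rw [hN u v hu hv x]
  rw [vfBracket_smul_right lam _ v x dlam dv]
  rw [vfBracket_smul_left lam u _ x dlam du]
  rw [vfBracket_smul_right lam _ v x dlam dv]
  rw [vfBracket_smul_left lam u v x dlam du]
  rw [hdl' (u x), hdl' (v x)]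
  simp only [map_add, map_sub, map_smul, smul_eq_mul]
  module
end
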